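/- arXiv:1909.09984 — 8 statements merged into one kernel-verified Lean document; each statement's English description precedes it below -/
import Mathlib

section
/- Let d ≥ 1, r ≥ 1 be integers, ε > 0, and let 𝓗 be a finite family of digraphs, each having at most r vertices and at least one edge. Let G be a digraph on n vertices with out-degree at most d such that every digraph G' on the same vertex set with out-degree at most d that is 𝓗-free (contains no subgraph copy of any member of 𝓗) satisfies dist(G,G') > ε·d·n. Then G contains at least ε·n/r pairwise edge-disjoint subgraph copies of members of 𝓗. -/
/-- A digraph: a finite vertex set `Fin n` with an irreflexive edge set. -/
structure Dgraph where
  n : ℕ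
  E : Finset (Fin n × Fin n)
  irrefl : ∀ e ∈ E, e.1 ≠ e.2

/-- The out-degree of a vertex `v` with respect to an edge set `E`. -/
def outdeg {n : ℕ} (E : Finset (Fin n × Fin n)) (v : Fin n) : ℕ :=
  (E.filter (fun e => e.1 = v)).card

/-- `φ` is a subgraph copy of the digraph with edge set `HE` in the digraph
with edge set `GE`. -/
def IsCopy {k n : ℕ} (HE : Finset (Fin k × Fin k)) (GE : Finset (Fin n × Fin n))
    (φ : Fin k → Fin n) : Prop :=
  Function.Injective φ ∧ ∀ e ∈ HE, (φ e.1, φ e.2) ∈ GE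

/-- The edge set of the copy given by `φ`. -/
def copyEdges {k n : ℕ} (HE : Finset (Fin k × Fin k)) (φ : Fin k → Fin n) :
    Finset (Fin n × Fin n) :=
  HE.image (fun e => (φ e.1, φ e.2))

/-- An edge set `GE` is `𝓗`-free: it has no subgraph copy of any member of the
family `H : Fin t → Dgraph`. -/
def HFree {n : ℕ} (t : ℕ) (H : Fin t → Dgraph) (GE : Finset (Fin n × Fin n)) : Prop :=
  ∀ i : Fin t, ∀ φ : Fin (H i).n → Fin n, ¬ IsCopy (H i).E GE φ

/-! Take a maximal family of edge-disjoint copies of members of `𝓗` in `G` and delete all of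
their edges. By maximality what is left is `𝓗`-free, it still has out-degree at most `d`, and
it differs from `G` only in the deleted edges. A copy of a member of `𝓗` has at most `r`
vertices, hence at most `r·d` edges in `G`, so `ε·d·n < m·r·d` for the number `m` of copies. -/

theorem exists_maximal_pairwiseDisjoint {ι α : Type*} [Finite ι] [DecidableEq α]
    (p : ι → Prop) (f : ι → Finset α) (hne : ∀ i, p i → (f i).Nonempty) :
    ∃ S : Finset ι, (∀ i ∈ S, p i) ∧ (S : Set ι).PairwiseDisjoint f ∧
      ∀ i, p i → ¬ Disjoint (f i) (S.biUnion f) := by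
  classical
  obtain ⟨S, ⟨hSp, hSdisj⟩, hmax⟩ :=
    (Set.toFinite {S : Finset ι | (∀ i ∈ S, p i) ∧ (S : Set ι).PairwiseDisjoint f}).exists_maximal
      ⟨∅, by simp⟩
  refine ⟨S, hSp, hSdisj, fun i hi hdisj => ?_⟩
  have hdisj_of_mem : ∀ j ∈ S, Disjoint (f i) (f j) := fun j hj =>
    hdisj.mono_right (Finset.subset_biUnion_of_mem f hj)
  have hiS : i ∉ S := fun hiS => (hne i hi).ne_empty (disjoint_self.mp (hdisj_of_mem i hiS))
  have hinsert : insert i S ⊆ S := by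
    refine hmax ⟨?_, ?_⟩ (Finset.subset_insert i S)
    · exact Finset.forall_mem_insert _ _ _ |>.mpr ⟨hi, hSp⟩
    · rw [Finset.coe_insert]
      exact hSdisj.insert fun j hj _ => hdisj_of_mem j hj
  exact hiS (hinsert (Finset.mem_insert_self i S))

section Copies

variable {k n : ℕ} {HE : Finset (Fin k × Fin k)} {E E' : Finset (Fin n × Fin n)}
  {φ : Fin k → Fin n}

theorem IsCopy.copyEdges_subset (h : IsCopy HE E φ) : copyEdges HE φ ⊆ E :=
  Finset.image_subset_iff.mpr h.2

theorem IsCopy.mono (h : IsCopy HE E φ) (hE : E ⊆ E') : IsCopy HE E' φ :=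
  ⟨h.1, fun e he => hE (h.2 e he)⟩

theorem outdeg_mono (hE : E' ⊆ E) (v : Fin n) : outdeg E' v ≤ outdeg E v :=
  Finset.card_le_card (Finset.filter_subset_filter _ hE)

theorem card_le_card_mul_of_forall_fst_mem {d : ℕ} {F : Finset (Fin n × Fin n)}
    {S : Finset (Fin n)} (hFE : F ⊆ E) (hS : ∀ e ∈ F, e.1 ∈ S) (hdeg : ∀ v, outdeg E v ≤ d) :
    F.card ≤ S.card * d := by
  have hF : F ⊆ S.biUnion fun v => E.filter fun e => e.1 = v := fun e he =>
    Finset.mem_biUnion.mpr ⟨e.1, hS e he, Finset.mem_filter.mpr ⟨hFE he, rfl⟩⟩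
  exact (Finset.card_le_card hF).trans (Finset.card_biUnion_le_card_mul _ _ _ fun v _ => hdeg v)

theorem card_copyEdges_le {d : ℕ} (h : copyEdges HE φ ⊆ E) (hdeg : ∀ v, outdeg E v ≤ d) :
    (copyEdges HE φ).card ≤ k * d := by
  have hsrc : ∀ e ∈ copyEdges HE φ, e.1 ∈ Finset.univ.image φ := by
    intro e he
    obtain ⟨a, -, rfl⟩ := Finset.mem_image.mp he
    exact Finset.mem_image_of_mem φ (Finset.mem_univ a.1)
  calc (copyEdges HE φ).card ≤ (Finset.univ.image φ).card * d :=
        card_le_card_mul_of_forall_fst_mem h hsrc hdeg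
    _ ≤ k * d := Nat.mul_le_mul_right d (Finset.card_image_le.trans_eq (Finset.card_fin k))

end Copies

theorem exists_indexed_copies_of_finset {t n : ℕ} {H : Fin t → Dgraph}
    {E : Finset (Fin n × Fin n)} (S : Finset (Σ i : Fin t, Fin (H i).n → Fin n))
    (hcopy : ∀ c ∈ S, IsCopy (H c.1).E E c.2)
    (hdisj : (S : Set (Σ i : Fin t, Fin (H i).n → Fin n)).PairwiseDisjoint
      fun c => copyEdges (H c.1).E c.2) :
    ∃ (idx : Fin S.card → Fin t) (φ : ∀ j, Fin (H (idx j)).n → Fin n),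
      (∀ j, IsCopy (H (idx j)).E E (φ j)) ∧
      ∀ j j', j ≠ j' →
        Disjoint (copyEdges (H (idx j)).E (φ j)) (copyEdges (H (idx j')).E (φ j')) := by
  let c := S.equivFin.symm
  exact ⟨fun j => (c j).1.1, fun j => (c j).1.2, fun j => hcopy _ (c j).2,
    fun j j' hjj' => hdisj (c j).2 (c j').2 fun h => hjj' (c.injective (Subtype.ext h))⟩

theorem many_edge_disjoint_copies_of_far_general
    (d r : ℕ) (ε : ℝ)
    (t : ℕ) (H : Fin t → Dgraph)
    (hsize : ∀ i, (H i).n ≤ r) (hedge : ∀ i, ((H i).E).Nonempty)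
    (n : ℕ) (E : Finset (Fin n × Fin n)) (hirr : ∀ e ∈ E, e.1 ≠ e.2)
    (hdeg : ∀ v, outdeg E v ≤ d)
    (hfar : ∀ E' : Finset (Fin n × Fin n), (∀ e ∈ E', e.1 ≠ e.2) →
      (∀ v, outdeg E' v ≤ d) → HFree t H E' →
      (ε * d * n : ℝ) < ((symmDiff E E').card : ℝ)) :
    ∃ m : ℕ, (ε * n / r : ℝ) ≤ (m : ℝ) ∧
      ∃ (idx : Fin m → Fin t) (φ : ∀ j, Fin (H (idx j)).n → Fin n),
        (∀ j, IsCopy (H (idx j)).E E (φ j)) ∧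
        ∀ j j', j ≠ j' →
          Disjoint (copyEdges (H (idx j)).E (φ j)) (copyEdges (H (idx j')).E (φ j')) := by
  obtain ⟨S, hcopy, hdisj, hmax⟩ := exists_maximal_pairwiseDisjoint
    (fun c : Σ i : Fin t, Fin (H i).n → Fin n => IsCopy (H c.1).E E c.2)
    (fun c => copyEdges (H c.1).E c.2) (fun c _ => (hedge c.1).image _)
  set R := S.biUnion fun c => copyEdges (H c.1).E c.2
  have hfree : HFree t H (E \ R) := fun i φ hφ =>
    hmax ⟨i, φ⟩ (hφ.mono Finset.sdiff_subset)
      (Finset.disjoint_of_subset_left hφ.copyEdges_subset Finset.sdiff_disjoint)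
  have hR : R.card ≤ S.card * r * d := by
    rw [mul_assoc]
    exact Finset.card_biUnion_le_card_mul _ _ _ fun c hc =>
        (card_copyEdges_le (hcopy c hc).copyEdges_subset hdeg).trans
          (Nat.mul_le_mul_right d (hsize c.1))
  have hdist : (ε * n * d : ℝ) < S.card * r * d := calc
    (ε * n * d : ℝ) = ε * d * n := by ring
    _ < (symmDiff E (E \ R)).card :=
      hfar _ (fun e he => hirr e (Finset.sdiff_subset he))
        (fun v => (outdeg_mono Finset.sdiff_subset v).trans (hdeg v)) hfree
    _ ≤ R.card := by
      rw [symmDiff_of_ge sdiff_le, sdiff_sdiff_right_self]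
      exact_mod_cast Finset.card_le_card Finset.inter_subset_right
    _ ≤ S.card * r * d := by exact_mod_cast hR
  have hm : ε * n ≤ S.card * r := (lt_of_mul_lt_mul_right hdist d.cast_nonneg).le
  exact ⟨S.card, div_le_of_le_mul₀ r.cast_nonneg S.card.cast_nonneg hm,
    exists_indexed_copies_of_finset S hcopy hdisj⟩

/-- if every `𝓗`-free `d`-out-bounded digraph on the same vertex set is at
distance more than `ε·d·n` from `G`, then `G` contains at least `ε·n/r` pairwise
edge-disjoint subgraph copies of members of `𝓗`. -/
theorem many_edge_disjoint_copies_of_far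
    (d r : ℕ) (hd : 1 ≤ d) (hr : 1 ≤ r) (ε : ℝ) (hε : 0 < ε)
    (t : ℕ) (H : Fin t → Dgraph)
    (hsize : ∀ i, (H i).n ≤ r) (hedge : ∀ i, ((H i).E).Nonempty)
    (n : ℕ) (E : Finset (Fin n × Fin n)) (hirr : ∀ e ∈ E, e.1 ≠ e.2)
    (hdeg : ∀ v, outdeg E v ≤ d)
    (hfar : ∀ E' : Finset (Fin n × Fin n), (∀ e ∈ E', e.1 ≠ e.2) →
      (∀ v, outdeg E' v ≤ d) → HFree t H E' →
      (ε * d * n : ℝ) < ((symmDiff E E').card : ℝ)) :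
    ∃ m : ℕ, (ε * n / r : ℝ) ≤ (m : ℝ) ∧
      ∃ (idx : Fin m → Fin t) (φ : ∀ j, Fin (H (idx j)).n → Fin n),
        (∀ j, IsCopy (H (idx j)).E E (φ j)) ∧
        ∀ j j', j ≠ j' →
          Disjoint (copyEdges (H (idx j)).E (φ j)) (copyEdges (H (idx j')).E (φ j')) :=
  many_edge_disjoint_copies_of_far_general d r ε t H hsize hedge n E hirr hdeg hfar
end

section
/- Let d ≥ 1 and let H be a digraph with at least 2 vertices that has a root v₀, i.e., a vertex from which every vertex of H is reachable by a directed path in H. Let G be a digraph with out-degree at most d. If G contains m pairwise edge-disjoint subgraph copies of H, then there are at least m/d distinct vertices u of G such that u = φ(v₀) for some subgraph copy φ of H in G. -/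
def ReachIn {k : ℕ} (HE : Finset (Fin k × Fin k)) (a b : Fin k) : Prop :=
  Relation.ReflTransGen (fun x y => (x, y) ∈ HE) a b

theorem ReachIn.exists_out_edge {k : ℕ} {HE : Finset (Fin k × Fin k)} {a b : Fin k}
    (h : ReachIn HE a b) (hne : a ≠ b) : ∃ c, (a, c) ∈ HE := by
  rcases h.cases_head with rfl | ⟨c, hc, -⟩
  · exact absurd rfl hne
  · exact ⟨c, hc⟩

theorem card_le_mul_card_image_fst_of_outdeg_le {n d : ℕ} {E T : Finset (Fin n × Fin n)}
    (hdeg : ∀ v, outdeg E v ≤ d) (hT : T ⊆ E) : T.card ≤ d * (T.image Prod.fst).card :=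
  T.card_le_mul_card_image d fun v _ =>
    (Finset.card_le_card (Finset.filter_subset_filter _ hT)).trans (hdeg v)

theorem injective_map_edge_of_pairwise_disjoint {k n m : ℕ} {HE : Finset (Fin k × Fin k)}
    {φ : Fin m → Fin k → Fin n}
    (hdisj : ∀ j j', j ≠ j' → Disjoint (copyEdges HE (φ j)) (copyEdges HE (φ j')))
    {a b : Fin k} (hab : (a, b) ∈ HE) : Function.Injective fun j => (φ j a, φ j b) := by
  intro j j' (hjj' : (φ j a, φ j b) = (φ j' a, φ j' b))
  by_contra hne
  have hmem : ∀ i, (φ i a, φ i b) ∈ copyEdges HE (φ i) := fun i =>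
    Finset.mem_image.mpr ⟨(a, b), hab, rfl⟩
  exact Finset.disjoint_left.mp (hdisj j j' hne) (hmem j) (hjj' ▸ hmem j')

theorem many_roots_of_edge_disjoint_copies_general
    (d : ℕ) (k : ℕ) (hk : 2 ≤ k)
    (HE : Finset (Fin k × Fin k))
    (v₀ : Fin k) (hroot : ∀ u : Fin k, ReachIn HE v₀ u)
    (n : ℕ) (E : Finset (Fin n × Fin n))
    (hdeg : ∀ v, outdeg E v ≤ d)
    (m : ℕ) (φ : Fin m → (Fin k → Fin n))
    (hcopy : ∀ j, IsCopy HE E (φ j))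
    (hdisj : ∀ j j', j ≠ j' → Disjoint (copyEdges HE (φ j)) (copyEdges HE (φ j'))) :
    (m : ℝ) / (d : ℝ) ≤
      (({u : Fin n | ∃ ψ : Fin k → Fin n, IsCopy HE E ψ ∧ ψ v₀ = u}).ncard : ℝ) := by
  classical
  have : Nontrivial (Fin k) := Fin.nontrivial_iff_two_le.mpr hk
  obtain ⟨u, hu⟩ := exists_ne v₀
  obtain ⟨w, hw⟩ := (hroot u).exists_out_edge hu.symm
  set T := Finset.univ.image fun j => (φ j v₀, φ j w)
  have hTcard : T.card = m := by
    rw [Finset.card_image_of_injective _ (injective_map_edge_of_pairwise_disjoint hdisj hw),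
      Finset.card_univ, Fintype.card_fin]
  have hTE : T ⊆ E := by
    simp only [T, Finset.image_subset_iff]
    exact fun j _ => (hcopy j).2 _ hw
  set R := {u | ∃ ψ : Fin k → Fin n, IsCopy HE E ψ ∧ ψ v₀ = u}
  have htails : ((T.image Prod.fst : Finset (Fin n)) : Set (Fin n)) ⊆ R := by
    simp only [T, Finset.coe_image, Finset.coe_univ, Set.image_univ, ← Set.range_comp]
    exact Set.range_subset_iff.mpr fun j => ⟨φ j, hcopy j, rfl⟩
  have hm : m ≤ d * R.ncard := by
    calc m = T.card := hTcard.symm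
      _ ≤ d * (T.image Prod.fst).card := card_le_mul_card_image_fst_of_outdeg_le hdeg hTE
      _ ≤ _ := Nat.mul_le_mul_left d (Set.ncard_coe_finset _ ▸ Set.ncard_le_ncard htails)
  refine div_le_of_le_mul₀ (Nat.cast_nonneg d) (Nat.cast_nonneg _) ?_
  rw [mul_comm]
  exact_mod_cast hm

/-- if a `d`-out-bounded digraph `G` contains `m` pairwise edge-disjoint
copies of a rooted digraph `H` (with root `v₀`, at least 2 vertices), then at least
`m/d` distinct vertices of `G` are images of `v₀` under some copy of `H`. -/
theorem many_roots_of_edge_disjoint_copies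
    (d : ℕ) (hd : 1 ≤ d) (k : ℕ) (hk : 2 ≤ k)
    (HE : Finset (Fin k × Fin k)) (hHirr : ∀ e ∈ HE, e.1 ≠ e.2)
    (v₀ : Fin k) (hroot : ∀ u : Fin k, ReachIn HE v₀ u)
    (n : ℕ) (E : Finset (Fin n × Fin n)) (hirr : ∀ e ∈ E, e.1 ≠ e.2)
    (hdeg : ∀ v, outdeg E v ≤ d)
    (m : ℕ) (φ : Fin m → (Fin k → Fin n))
    (hcopy : ∀ j, IsCopy HE E (φ j))
    (hdisj : ∀ j j', j ≠ j' → Disjoint (copyEdges HE (φ j)) (copyEdges HE (φ j'))) :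
    (m : ℝ) / (d : ℝ) ≤
      (({u : Fin n | ∃ ψ : Fin k → Fin n, IsCopy HE E ψ ∧ ψ v₀ = u}).ncard : ℝ) :=
  many_roots_of_edge_disjoint_copies_general d k hk HE v₀ hroot n E hdeg m φ hcopy hdisj
end

section
/- Let d ≥ 1, r ≥ 1 be integers, ε > 0, and let 𝓗 = {H₁, …, H_t} be a finite family of digraphs, each having at most r vertices, at least 2 vertices, and a root (a vertex from which every vertex of that digraph is reachable by a directed path). Let G be a digraph on n vertices with out-degree at most d such that every digraph G' on the same vertex set with out-degree at most d that is 𝓗-free satisfies dist(G,G') > ε·d·n. Then there exists an index i ∈ {1,…,t} and a root w of H_i such that at least ε·n/(t·r·d) distinct vertices u of G satisfy u = φ(w) for some subgraph copy φ of H_i in G. -/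
/-- if every `𝓗`-free `d`-out-bounded digraph on the same vertex set is at
distance more than `ε·d·n` from `G`, where `𝓗 = {H₁, …, H_t}` consists of rooted digraphs
with at most `r` and at least `2` vertices, then for some `i` and some root `w` of `H_i`,
at least `ε·n/(t·r·d)` distinct vertices of `G` are images of `w` under copies of `H_i`. -/
theorem many_root_vertices_of_far
    (d r : ℕ) (hd : 1 ≤ d) (hr : 1 ≤ r) (ε : ℝ) (hε : 0 < ε)
    (t : ℕ) (H : Fin t → Dgraph)
    (hsize : ∀ i, (H i).n ≤ r) (htwo : ∀ i, 2 ≤ (H i).n)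
    (hrooted : ∀ i, ∃ w : Fin (H i).n, ∀ u, ReachIn (H i).E w u)
    (n : ℕ) (E : Finset (Fin n × Fin n)) (hirr : ∀ e ∈ E, e.1 ≠ e.2)
    (hdeg : ∀ v, outdeg E v ≤ d)
    (hfar : ∀ E' : Finset (Fin n × Fin n), (∀ e ∈ E', e.1 ≠ e.2) →
      (∀ v, outdeg E' v ≤ d) → HFree t H E' →
      (ε * d * n : ℝ) < ((symmDiff E E').card : ℝ)) :
    ∃ (i : Fin t) (w : Fin (H i).n), (∀ u, ReachIn (H i).E w u) ∧
      (ε * n / (t * r * d) : ℝ) ≤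
        (({u : Fin n | ∃ φ : Fin (H i).n → Fin n, IsCopy (H i).E E φ ∧ φ w = u}).ncard : ℝ) := by
  classical
  by_contra hcon
  push_neg at hcon
  choose w hw using hrooted
  set c : ℝ := ε * n / (t * r * d) with hc
  let Si : Fin t → Finset (Fin n) := fun i =>
    Finset.univ.filter (fun u => ∃ φ, IsCopy (H i).E E φ ∧ φ (w i) = u)
  have hSi : ∀ i, ((Si i).card : ℝ) < c := by
    intro i
    have h := hcon i (w i) (hw i)
    have heq : ({u : Fin n | ∃ φ, IsCopy (H i).E E φ ∧ φ (w i) = u}).ncard = (Si i).card := by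
      rw [← Set.ncard_coe_finset]
      congr 1
      ext u
      simp [Si]
    rw [heq] at h
    exact h
  let S : Finset (Fin n) := Finset.univ.biUnion Si
  let E' : Finset (Fin n × Fin n) := E.filter (fun e => e.1 ∉ S)
  have hE'sub : E' ⊆ E := Finset.filter_subset _ _
  have hirr' : ∀ e ∈ E', e.1 ≠ e.2 := fun e he => hirr e (hE'sub he)
  have hdeg' : ∀ v, outdeg E' v ≤ d := by
    intro v
    refine le_trans ?_ (hdeg v)
    exact Finset.card_le_card (Finset.filter_subset_filter _ hE'sub)
  have hfree : HFree t H E' := by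
    intro i φ hφ
    have hcopyE : IsCopy (H i).E E φ := ⟨hφ.1, fun e he => hE'sub (hφ.2 e he)⟩
    have hmem : φ (w i) ∈ S := by
      refine Finset.mem_biUnion.mpr ⟨i, Finset.mem_univ _, ?_⟩
      simp only [Si, Finset.mem_filter, Finset.mem_univ, true_and]
      exact ⟨φ, hcopyE, rfl⟩
    obtain ⟨u, hu⟩ : ∃ u : Fin (H i).n, u ≠ w i := by
      have h2 : 1 < Fintype.card (Fin (H i).n) := by
        rw [Fintype.card_fin]; exact htwo i
      exact Fintype.exists_ne_of_one_lt_card h2 (w i)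
    rcases (hw i u).cases_head with h | ⟨x, hx, _⟩
    · exact hu h.symm
    · have hmemE' : (φ (w i), φ x) ∈ E' := hφ.2 (w i, x) hx
      exact (Finset.mem_filter.mp hmemE').2 hmem
  have hlt := hfar E' hirr' hdeg' hfree
  have hsd : symmDiff E E' = E.filter (fun e => e.1 ∈ S) := by
    rw [symmDiff_of_ge (Finset.le_iff_subset.mpr hE'sub)]
    rw [show E' = E.filter (fun e => e.1 ∉ S) from rfl]
    rw [← Finset.filter_not]
    simp
  have hcard : (symmDiff E E').card ≤ S.card * d := by
    rw [hsd]
    calc (E.filter (fun e => e.1 ∈ S)).card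
        ≤ (S.biUnion (fun u => E.filter (fun e => e.1 = u))).card := by
          apply Finset.card_le_card
          intro e he
          rw [Finset.mem_filter] at he
          exact Finset.mem_biUnion.mpr ⟨e.1, he.2, Finset.mem_filter.mpr ⟨he.1, rfl⟩⟩
      _ ≤ ∑ u ∈ S, (E.filter (fun e => e.1 = u)).card := Finset.card_biUnion_le
      _ ≤ ∑ _u ∈ S, d := Finset.sum_le_sum (fun u _ => hdeg u)
      _ = S.card * d := by simp [Finset.sum_const, Nat.smul_one_eq_cast]
  have hScard : ((S.card : ℝ)) ≤ t * c := by
    have h1 : S.card ≤ ∑ i : Fin t, (Si i).card := Finset.card_biUnion_le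
    have h2 : ((∑ i : Fin t, (Si i).card : ℕ) : ℝ) ≤ ∑ i : Fin t, c := by
      push_cast
      exact Finset.sum_le_sum (fun i _ => (hSi i).le)
    calc ((S.card : ℝ)) ≤ ((∑ i : Fin t, (Si i).card : ℕ) : ℝ) := by exact_mod_cast h1
      _ ≤ ∑ i : Fin t, c := h2
      _ = t * c := by simp [Finset.sum_const, mul_comm]
  have hfinal : (t : ℝ) * c * d ≤ ε * d * n := by
    rcases Nat.eq_zero_or_pos t with ht | ht
    · subst ht
      simp only [Nat.cast_zero, zero_mul]
      positivity
    · have ht' : (0 : ℝ) < t := by exact_mod_cast ht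
      have hr' : (1 : ℝ) ≤ r := by exact_mod_cast hr
      have hd' : (1 : ℝ) ≤ d := by exact_mod_cast hd
      have heq : (t : ℝ) * c * d = ε * n / r := by
        rw [hc]
        field_simp
      rw [heq]
      have h0 : (0 : ℝ) ≤ ε * n := by positivity
      calc ε * n / r ≤ ε * n := by
            apply div_le_self h0 hr'
        _ = ε * 1 * n := by ring
        _ ≤ ε * d * n := by
            apply mul_le_mul_of_nonneg_right _ (by positivity)
            exact mul_le_mul_of_nonneg_left hd' hε.le
  have hchain : (ε * d * n : ℝ) < ε * d * n := by
    calc (ε * d * n : ℝ) < ((symmDiff E E').card : ℝ) := hlt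
      _ ≤ (S.card : ℝ) * d := by exact_mod_cast hcard
      _ ≤ (t * c) * d := by
          apply mul_le_mul_of_nonneg_right hScard (by positivity)
      _ = (t : ℝ) * c * d := by ring
      _ ≤ ε * d * n := hfinal
  exact lt_irrefl _ hchain
end

section
/- Let d ≥ 1 and ε > 0. Let H be a digraph with at least 2 vertices, no isolated vertices (every vertex of H is an endpoint of some edge of H), and having at least one root. Let G be a digraph on n vertices with out-degree at most d such that every digraph G' on the same vertex set with out-degree at most d containing no induced copy of H satisfies dist(G,G') > ε·d·n. Call a vertex u of G a root vertex if there is an induced copy φ of H in G and a root w of H with u = φ(w). Then the number of edges of G having at least one endpoint that is a root vertex is at least ε·n/2. -/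
/-- `φ` is an induced copy of the digraph with edge set `HE` in the digraph
with edge set `GE`. -/
def IsInducedCopy {k n : ℕ} (HE : Finset (Fin k × Fin k)) (GE : Finset (Fin n × Fin n))
    (φ : Fin k → Fin n) : Prop :=
  Function.Injective φ ∧ ∀ a b : Fin k, ((a, b) ∈ HE ↔ (φ a, φ b) ∈ GE)

/-- `u` is a root vertex of `GE` w.r.t. the digraph `HE`: the image of a root of `HE`
under some induced copy of `HE` in `GE`. -/
def IsRootVertex {k n : ℕ} (HE : Finset (Fin k × Fin k)) (GE : Finset (Fin n × Fin n))
    (u : Fin n) : Prop :=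
  ∃ (φ : Fin k → Fin n) (w : Fin k),
    IsInducedCopy HE GE φ ∧ (∀ x, ReachIn HE w x) ∧ φ w = u

/-- if every `d`-out-bounded digraph on the same vertex set with no induced
copy of `H` is at distance more than `ε·d·n` from `G`, where `H` has at least 2 vertices,
no isolated vertices, and at least one root, then at least `ε·n/2` edges of `G` have an
endpoint that is a root vertex. -/
theorem many_edges_at_root_vertices_of_far
    (d : ℕ) (hd : 1 ≤ d) (ε : ℝ) (hε : 0 < ε)
    (k : ℕ) (hk : 2 ≤ k)
    (HE : Finset (Fin k × Fin k)) (hHirr : ∀ e ∈ HE, e.1 ≠ e.2)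
    (hnoiso : ∀ v : Fin k, ∃ e ∈ HE, e.1 = v ∨ e.2 = v)
    (hrooted : ∃ w : Fin k, ∀ u, ReachIn HE w u)
    (n : ℕ) (E : Finset (Fin n × Fin n)) (hirr : ∀ e ∈ E, e.1 ≠ e.2)
    (hdeg : ∀ v, outdeg E v ≤ d)
    (hfar : ∀ E' : Finset (Fin n × Fin n), (∀ e ∈ E', e.1 ≠ e.2) →
      (∀ v, outdeg E' v ≤ d) →
      (∀ φ : Fin k → Fin n, ¬ IsInducedCopy HE E' φ) →
      (ε * d * n : ℝ) < ((symmDiff E E').card : ℝ)) :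
    (ε * n / 2 : ℝ) ≤
      (({e : Fin n × Fin n | e ∈ E ∧ (IsRootVertex HE E e.1 ∨ IsRootVertex HE E e.2)}).ncard :
        ℝ) := by
  classical
  set P : Fin n × Fin n → Prop :=
    fun e => IsRootVertex HE E e.1 ∨ IsRootVertex HE E e.2 with hP
  set E' : Finset (Fin n × Fin n) := E.filter (fun e => ¬ P e) with hE'
  have hsub : E' ⊆ E := Finset.filter_subset _ _
  -- E' has no induced copy of H
  have hnocopy : ∀ φ : Fin k → Fin n, ¬ IsInducedCopy HE E' φ := by
    intro φ hφ
    obtain ⟨hinj, hiff⟩ := hφ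
    -- every image vertex is non-root
    have hnr : ∀ a : Fin k, ¬ IsRootVertex HE E (φ a) := by
      intro a
      obtain ⟨e, heH, hcase⟩ := hnoiso a
      have hmem : (φ e.1, φ e.2) ∈ E' := (hiff e.1 e.2).1 (by simpa using heH)
      have := (Finset.mem_filter.1 hmem).2
      rcases hcase with h1 | h2
      · intro hroot; exact this (Or.inl (by rw [h1] at *; exact hroot))
      · intro hroot; exact this (Or.inr (by rw [h2] at *; exact hroot))
    -- φ is an induced copy in E
    have hcopyE : IsInducedCopy HE E φ := by
      refine ⟨hinj, fun a b => ⟨fun h => hsub ((hiff a b).1 h), fun h => ?_⟩⟩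
      refine (hiff a b).2 ?_
      refine Finset.mem_filter.2 ⟨h, ?_⟩
      rintro (hr | hr)
      · exact hnr a hr
      · exact hnr b hr
    obtain ⟨w, hw⟩ := hrooted
    exact hnr w ⟨φ, w, hcopyE, hw, rfl⟩
  -- degree and irreflexivity of E'
  have hirr' : ∀ e ∈ E', e.1 ≠ e.2 := fun e he => hirr e (hsub he)
  have hdeg' : ∀ v, outdeg E' v ≤ d := by
    intro v
    refine le_trans ?_ (hdeg v)
    unfold outdeg
    exact Finset.card_le_card (fun e he => by
      simp only [Finset.mem_filter] at *
      exact ⟨hsub he.1, he.2⟩)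
  have hkey := hfar E' hirr' hdeg' hnocopy
  -- symmDiff E E' = E.filter P
  have hsd : symmDiff E E' = E.filter (fun e => P e) := by
    ext e
    simp only [Finset.mem_symmDiff, hE', Finset.mem_filter]
    tauto
  -- the set in the statement equals the filter
  have hset : ({e : Fin n × Fin n | e ∈ E ∧ (IsRootVertex HE E e.1 ∨ IsRootVertex HE E e.2)})
      = ↑(E.filter (fun e => P e)) := by
    ext e
    simp [hP]
  rw [hset, Set.ncard_coe_finset]
  rw [hsd] at hkey
  have h1 : (1 : ℝ) ≤ d := by exact_mod_cast hd
  have h0 : (0 : ℝ) ≤ n := Nat.cast_nonneg n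
  nlinarith [hkey]
end

section
/- Let d ≥ 1, r ≥ 1 be integers, ε > 0, and let 𝓗 be a finite family of digraphs, each having at most r vertices and no isolated vertices (every vertex of each member is an endpoint of some edge of that member). Let G be a digraph on n vertices with both in-degree and out-degree at most d at every vertex, such that every digraph G' on the same vertex set with in-degree and out-degree at most d that contains no induced copy of any member of 𝓗 satisfies dist(G,G') > ε·d·n. Then G contains more than ε·n/(2r) pairwise vertex-disjoint induced copies of members of 𝓗. -/
/-- The in-degree of a vertex `v` with respect to an edge set `E`. -/
def indeg {n : ℕ} (E : Finset (Fin n × Fin n)) (v : Fin n) : ℕ :=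
  (E.filter (fun e => e.2 = v)).card

/-- An edge set `GE` has no induced copy of any member of the family `H : Fin t → Dgraph`. -/
def InducedFree {n : ℕ} (t : ℕ) (H : Fin t → Dgraph) (GE : Finset (Fin n × Fin n)) : Prop :=
  ∀ i : Fin t, ∀ φ : Fin (H i).n → Fin n, ¬ IsInducedCopy (H i).E GE φ

/-- in the model where both in- and out-degrees are bounded by `d`, if every
such digraph on the same vertex set with no induced copy of any member of `𝓗` is at
distance more than `ε·d·n` from `G`, where each member of `𝓗` has at most `r` vertices
and no isolated vertices, then `G` contains more than `ε·n/(2r)` pairwise vertex-disjoint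
induced copies of members of `𝓗`. -/
theorem many_vertex_disjoint_induced_copies_of_far
    (d r : ℕ) (hd : 1 ≤ d) (hr : 1 ≤ r) (ε : ℝ) (hε : 0 < ε)
    (t : ℕ) (H : Fin t → Dgraph)
    (hsize : ∀ i, (H i).n ≤ r)
    (hnoiso : ∀ i, ∀ v : Fin (H i).n, ∃ e ∈ (H i).E, e.1 = v ∨ e.2 = v)
    (n : ℕ) (E : Finset (Fin n × Fin n)) (hirr : ∀ e ∈ E, e.1 ≠ e.2)
    (hdeg : ∀ v, outdeg E v ≤ d ∧ indeg E v ≤ d)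
    (hfar : ∀ E' : Finset (Fin n × Fin n), (∀ e ∈ E', e.1 ≠ e.2) →
      (∀ v, outdeg E' v ≤ d ∧ indeg E' v ≤ d) → InducedFree t H E' →
      (ε * d * n : ℝ) < ((symmDiff E E').card : ℝ)) :
    ∃ m : ℕ, (ε * n / (2 * r) : ℝ) < (m : ℝ) ∧
      ∃ (idx : Fin m → Fin t) (φ : ∀ j, Fin (H (idx j)).n → Fin n),
        (∀ j, IsInducedCopy (H (idx j)).E E (φ j)) ∧
        ∀ j j', j ≠ j' → ∀ a b, φ j a ≠ φ j' b := by
  classical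
  by_cases h0 : ∃ i : Fin t, (H i).n = 0
  · -- degenerate case: some member is empty, copies are free
    obtain ⟨i, hi⟩ := h0
    refine ⟨⌈ε * n / (2 * r)⌉₊ + 1, ?_, fun _ => i,
      fun _ => fun a => (Fin.cast hi a).elim0, ?_, ?_⟩
    · have h1 : (ε * n / (2 * r) : ℝ) ≤ (⌈ε * n / (2 * r)⌉₊ : ℝ) := Nat.le_ceil _
      push_cast
      linarith
    · intro j
      refine ⟨fun a b _ => (Fin.cast hi a).elim0, fun a b => (Fin.cast hi a).elim0⟩
    · intro j j' _ a b
      exact (Fin.cast hi a).elim0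
  push_neg at h0
  have hpos : ∀ i, 0 < (H i).n := fun i => Nat.pos_of_ne_zero (h0 i)
  -- the predicate: there is a disjoint collection of size m
  set P : ℕ → Prop := fun m => ∃ (idx : Fin m → Fin t) (φ : ∀ j, Fin (H (idx j)).n → Fin n),
      (∀ j, IsInducedCopy (H (idx j)).E E (φ j)) ∧
      ∀ j j', j ≠ j' → ∀ a b, φ j a ≠ φ j' b with hP
  have hP0 : P 0 := ⟨Fin.elim0, fun j => j.elim0, fun j => j.elim0, fun j => j.elim0⟩
  -- any collection has size ≤ n
  have hbound : ∀ m, P m → m ≤ n := by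
    intro m ⟨idx, φ, hcopy, hdisj⟩
    have : Function.Injective (fun j : Fin m => φ j ⟨0, hpos (idx j)⟩) := by
      intro j j' hjj'
      by_contra hne
      exact hdisj j j' hne _ _ hjj'
    simpa using Fintype.card_le_of_injective _ this
  set m := Nat.findGreatest P n with hm
  have hPm : P m := Nat.findGreatest_spec (Nat.zero_le n) hP0
  have hmax : ∀ k, P k → k ≤ m := by
    intro k hk
    by_contra hlt
    push_neg at hlt
    exact Nat.findGreatest_is_greatest hlt (hbound k hk) hk
  obtain ⟨idx, φ, hcopy, hdisj⟩ := hPm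
  -- covered vertex set
  set S : Finset (Fin n) := Finset.univ.biUnion
      (fun j : Fin m => Finset.image (φ j) Finset.univ) with hS
  have hSmem : ∀ v, v ∈ S ↔ ∃ j a, φ j a = v := by
    intro v; simp [hS]
  have hScard : S.card ≤ m * r := by
    calc S.card ≤ ∑ j : Fin m, (Finset.image (φ j) Finset.univ).card :=
          Finset.card_biUnion_le
      _ ≤ ∑ j : Fin m, r := by
          refine Finset.sum_le_sum fun j _ => ?_
          calc (Finset.image (φ j) Finset.univ).card ≤ (Finset.univ : Finset (Fin (H (idx j)).n)).card :=
                Finset.card_image_le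
            _ = (H (idx j)).n := by simp
            _ ≤ r := hsize _
      _ = m * r := by simp [mul_comm]
  -- the modified edge set
  set E' : Finset (Fin n × Fin n) := E.filter (fun e => e.1 ∉ S ∧ e.2 ∉ S) with hE'
  have hE'sub : E' ⊆ E := Finset.filter_subset _ _
  have hE'irr : ∀ e ∈ E', e.1 ≠ e.2 := fun e he => hirr e (hE'sub he)
  have hE'deg : ∀ v, outdeg E' v ≤ d ∧ indeg E' v ≤ d := by
    intro v
    constructor
    · exact le_trans (Finset.card_le_card (Finset.filter_subset_filter _ hE'sub)) (hdeg v).1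
    · exact le_trans (Finset.card_le_card (Finset.filter_subset_filter _ hE'sub)) (hdeg v).2
  -- E' is induced-free, by maximality
  have hfree : InducedFree t H E' := by
    intro i ψ hψ
    have himg : ∀ a, ψ a ∉ S := by
      intro a
      obtain ⟨e, he, hcase⟩ := hnoiso i a
      have := (hψ.2 e.1 e.2).mp (by simpa using he)
      rw [hE', Finset.mem_filter] at this
      rcases hcase with h | h
      · rw [← h]; exact this.2.1
      · rw [← h]; exact this.2.2
    have hψE : IsInducedCopy (H i).E E ψ := by
      refine ⟨hψ.1, fun a b => ?_⟩
      rw [hψ.2 a b, hE', Finset.mem_filter]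
      exact ⟨fun h => h.1, fun h => ⟨h, himg a, himg b⟩⟩
    -- extend the collection
    have hPm1 : P (m + 1) := by
      refine ⟨Fin.cons i idx, Fin.cons ψ φ, ?_, ?_⟩
      · intro j
        refine Fin.cases ?_ ?_ j
        · exact hψE
        · intro j'; exact hcopy j'
      · intro j j'
        refine Fin.cases ?_ ?_ j
        · refine Fin.cases ?_ ?_ j'
          · intro h; exact absurd rfl h
          · intro j₂ _
            change ∀ (a : Fin (H i).n) (b : Fin (H (idx j₂)).n), ψ a ≠ φ j₂ b
            intro a b hab
            exact himg a (by rw [hab]; exact (hSmem _).mpr ⟨j₂, b, rfl⟩)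
        · intro j₁
          refine Fin.cases ?_ ?_ j'
          · intro _
            change ∀ (a : Fin (H (idx j₁)).n) (b : Fin (H i).n), φ j₁ a ≠ ψ b
            intro a b hab
            exact himg b (by rw [← hab]; exact (hSmem _).mpr ⟨j₁, a, rfl⟩)
          · intro j₂ h
            change ∀ (a : Fin (H (idx j₁)).n) (b : Fin (H (idx j₂)).n), φ j₁ a ≠ φ j₂ b
            exact hdisj j₁ j₂ (fun hh => h (by rw [hh])) 
    have := hmax (m + 1) hPm1
    omega
  -- the distance bound
  have hdist := hfar E' hE'irr hE'deg hfree
  have hsymm : symmDiff E E' = E \ E' := by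
    rw [symmDiff_def]
    simp [Finset.sdiff_eq_empty_iff_subset.mpr hE'sub]
  have hdiffcard : (E \ E').card ≤ 2 * d * (m * r) := by
    have hsub1 : E \ E' ⊆ E.filter (fun e => e.1 ∈ S) ∪ E.filter (fun e => e.2 ∈ S) := by
      intro e he
      rw [Finset.mem_sdiff, hE', Finset.mem_filter] at he
      have h1 := he.1
      have h2 : ¬(e.1 ∉ S ∧ e.2 ∉ S) := fun h => he.2 ⟨h1, h⟩
      push_neg at h2
      simp only [Finset.mem_union, Finset.mem_filter]
      by_cases hc : e.1 ∈ S
      · exact Or.inl ⟨h1, hc⟩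
      · exact Or.inr ⟨h1, h2 hc⟩
    have hout : (E.filter (fun e => e.1 ∈ S)).card ≤ S.card * d := by
      have heq : E.filter (fun e => e.1 ∈ S) = S.biUnion (fun v => E.filter (fun e => e.1 = v)) := by
        ext e
        simp only [Finset.mem_filter, Finset.mem_biUnion]
        constructor
        · rintro ⟨h1, h2⟩; exact ⟨e.1, h2, h1, rfl⟩
        · rintro ⟨v, hv, h1, h2⟩; exact ⟨h1, h2 ▸ hv⟩
      rw [heq]
      calc (S.biUnion fun v => E.filter (fun e => e.1 = v)).card
          ≤ ∑ v ∈ S, (E.filter (fun e => e.1 = v)).card := Finset.card_biUnion_le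
        _ ≤ ∑ v ∈ S, d := Finset.sum_le_sum fun v _ => (hdeg v).1
        _ = S.card * d := by simp [mul_comm]
    have hin : (E.filter (fun e => e.2 ∈ S)).card ≤ S.card * d := by
      have heq : E.filter (fun e => e.2 ∈ S) = S.biUnion (fun v => E.filter (fun e => e.2 = v)) := by
        ext e
        simp only [Finset.mem_filter, Finset.mem_biUnion]
        constructor
        · rintro ⟨h1, h2⟩; exact ⟨e.2, h2, h1, rfl⟩
        · rintro ⟨v, hv, h1, h2⟩; exact ⟨h1, h2 ▸ hv⟩
      rw [heq]
      calc (S.biUnion fun v => E.filter (fun e => e.2 = v)).card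
          ≤ ∑ v ∈ S, (E.filter (fun e => e.2 = v)).card := Finset.card_biUnion_le
        _ ≤ ∑ v ∈ S, d := Finset.sum_le_sum fun v _ => (hdeg v).2
        _ = S.card * d := by simp [mul_comm]
    calc (E \ E').card ≤ (E.filter (fun e => e.1 ∈ S) ∪ E.filter (fun e => e.2 ∈ S)).card :=
          Finset.card_le_card hsub1
      _ ≤ (E.filter (fun e => e.1 ∈ S)).card + (E.filter (fun e => e.2 ∈ S)).card :=
          Finset.card_union_le _ _
      _ ≤ S.card * d + S.card * d := add_le_add hout hin
      _ ≤ (m * r) * d + (m * r) * d := by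
          have := Nat.mul_le_mul_right d hScard; omega
      _ = 2 * d * (m * r) := by ring
  -- deduce the numeric bound
  have hlt : (ε * d * n : ℝ) < 2 * d * (m * r) := by
    rw [hsymm] at hdist
    calc (ε * d * n : ℝ) < ((E \ E').card : ℝ) := hdist
      _ ≤ ((2 * d * (m * r) : ℕ) : ℝ) := by exact_mod_cast hdiffcard
      _ = 2 * d * (m * r) := by push_cast; ring
  refine ⟨m, ?_, idx, φ, hcopy, hdisj⟩
  have hd' : (1 : ℝ) ≤ d := by exact_mod_cast hd
  have hr' : (1 : ℝ) ≤ r := by exact_mod_cast hr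
  rw [div_lt_iff₀ (by linarith)]
  nlinarith [hlt]
end

section
/- Let d ≥ 1, r ≥ 1 be integers, ε > 0, and let 𝓗 be a finite family of simple graphs, each having at most r vertices and at least one edge. Let G be a simple graph on n vertices with maximum degree at most d such that every simple graph G' on the same vertex set with maximum degree at most d that is 𝓗-free (contains no subgraph copy of any member of 𝓗) satisfies dist(G,G') > ε·d·n. Then G contains more than ε·n/r pairwise edge-disjoint subgraph copies of members of 𝓗. -/
/-- A finite simple graph: a vertex count together with a `SimpleGraph` on `Fin n`. -/
structure SGraph where
  n : ℕ
  adj : SimpleGraph (Fin n)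

/-- `φ` is a subgraph copy of the simple graph `H` in the simple graph `G`. -/
def UIsCopy {k n : ℕ} (H : SimpleGraph (Fin k)) (G : SimpleGraph (Fin n))
    (φ : Fin k → Fin n) : Prop :=
  Function.Injective φ ∧ ∀ a b : Fin k, H.Adj a b → G.Adj (φ a) (φ b)

/-- The edge set of the copy given by `φ`. -/
def ucopyEdges {k n : ℕ} (H : SimpleGraph (Fin k)) (φ : Fin k → Fin n) :
    Set (Sym2 (Fin n)) :=
  (Sym2.map φ) '' H.edgeSet

/-- `G` contains no subgraph copy of any member of the family `H : Fin t → SGraph`. -/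
def UFree {n : ℕ} (t : ℕ) (H : Fin t → SGraph) (G : SimpleGraph (Fin n)) : Prop :=
  ∀ i : Fin t, ∀ φ : Fin (H i).n → Fin n, ¬ UIsCopy (H i).adj G φ

/-- if every `𝓗`-free simple graph with maximum degree at most `d` on the
same vertex set is at distance more than `ε·d·n` from `G`, where each member of `𝓗` has
at most `r` vertices and at least one edge, then `G` contains more than `ε·n/r` pairwise
edge-disjoint subgraph copies of members of `𝓗`. -/
theorem many_edge_disjoint_copies_of_far_undirected
    (d r : ℕ) (hd : 1 ≤ d) (hr : 1 ≤ r) (ε : ℝ) (hε : 0 < ε)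
    (t : ℕ) (H : Fin t → SGraph)
    (hsize : ∀ i, (H i).n ≤ r)
    (hedge : ∀ i, ∃ a b : Fin (H i).n, (H i).adj.Adj a b)
    (n : ℕ) (G : SimpleGraph (Fin n))
    (hdeg : ∀ v, (G.neighborSet v).ncard ≤ d)
    (hfar : ∀ G' : SimpleGraph (Fin n), (∀ v, (G'.neighborSet v).ncard ≤ d) →
      UFree t H G' →
      (ε * d * n : ℝ) < ((symmDiff G.edgeSet G'.edgeSet).ncard : ℝ)) :
    ∃ m : ℕ, (ε * n / r : ℝ) < (m : ℝ) ∧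
      ∃ (idx : Fin m → Fin t) (φ : ∀ j, Fin (H (idx j)).n → Fin n),
        (∀ j, UIsCopy (H (idx j)).adj G (φ j)) ∧
        ∀ j j', j ≠ j' →
          Disjoint (ucopyEdges (H (idx j)).adj (φ j)) (ucopyEdges (H (idx j')).adj (φ j')) := by
  classical
  let C := Σ i : Fin t, (Fin (H i).n → Fin n)
  let ed : C → Set (Sym2 (Fin n)) := fun c => ucopyEdges (H c.1).adj c.2
  let P : Finset C → Prop := fun S =>
    (∀ c ∈ S, UIsCopy (H c.1).adj G c.2) ∧
    (S : Set C).Pairwise (fun c c' => Disjoint (ed c) (ed c'))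
  -- a maximal family
  obtain ⟨S, hSP, hSmax⟩ : ∃ S : Finset C, P S ∧ ∀ S' : Finset C, P S' → S'.card ≤ S.card := by
    obtain ⟨S, hS1, hS2⟩ := Finset.exists_max_image
      ((Finset.univ : Finset (Finset C)).filter P) Finset.card
      ⟨∅, by simp [P, Set.Pairwise]⟩
    exact ⟨S, (Finset.mem_filter.mp hS1).2, fun S' hS' =>
      hS2 S' (Finset.mem_filter.mpr ⟨Finset.mem_univ _, hS'⟩)⟩
  -- deleted edges and the new graph
  set D : Set (Sym2 (Fin n)) := ⋃ c ∈ S, ed c with hD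
  set G' : SimpleGraph (Fin n) := G.deleteEdges D with hG'
  have hedgeset : G'.edgeSet = G.edgeSet \ D := SimpleGraph.edgeSet_deleteEdges D
  have hle : G' ≤ G := SimpleGraph.deleteEdges_le D
  -- degree bound for G'
  have hdeg' : ∀ v, (G'.neighborSet v).ncard ≤ d := fun v =>
    le_trans (Set.ncard_le_ncard (fun w hw => hle hw) (Set.toFinite _)) (hdeg v)
  -- edges of a copy in G' lie in G'.edgeSet
  have hcopyE : ∀ (i : Fin t) (φ : Fin (H i).n → Fin n) (G'' : SimpleGraph (Fin n)),
      UIsCopy (H i).adj G'' φ → ucopyEdges (H i).adj φ ⊆ G''.edgeSet := by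
    rintro i φ G'' ⟨hinj, hadj⟩ e ⟨e0, he0, rfl⟩
    induction e0 with
    | _ a b => exact (SimpleGraph.mem_edgeSet _).mpr (hadj a b he0)
  -- G' is H-free
  have hfree : UFree t H G' := by
    intro i φ hcopy
    have hcopyG : UIsCopy (H i).adj G φ := ⟨hcopy.1, fun a b hab => hle (hcopy.2 a b hab)⟩
    set c : C := ⟨i, φ⟩ with hc
    have hsub : ed c ⊆ G'.edgeSet := hcopyE i φ G' hcopy
    have hdisj : ∀ c' ∈ S, Disjoint (ed c) (ed c') := by
      intro c' hc'
      refine Set.disjoint_left.mpr fun e he he' => ?_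
      have : e ∈ G'.edgeSet := hsub he
      rw [hedgeset] at this
      exact this.2 (Set.mem_biUnion hc' he')
    have hcS : c ∉ S := by
      intro hmem
      obtain ⟨a, b, hab⟩ := hedge i
      have he : Sym2.map φ s(a, b) ∈ ed c := ⟨s(a, b), hab, rfl⟩
      have : Sym2.map φ s(a, b) ∈ G'.edgeSet := hsub he
      rw [hedgeset] at this
      exact this.2 (Set.mem_biUnion hmem he)
    have hPins : P (insert c S) := by
      constructor
      · intro c' hc'
        rcases Finset.mem_insert.mp hc' with h | h
        · subst h; exact hcopyG
        · exact hSP.1 c' h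
      · intro x hx y hy hxy
        simp only [Finset.coe_insert, Set.mem_insert_iff] at hx hy
        rcases hx with rfl | hx
        · rcases hy with rfl | hy
          · exact absurd rfl hxy
          · exact hdisj y hy
        · rcases hy with rfl | hy
          · exact (hdisj x hx).symm
          · exact hSP.2 hx hy hxy
    have := hSmax (insert c S) hPins
    rw [Finset.card_insert_of_notMem hcS] at this
    omega
  -- per-copy edge bound
  have hkey : ∀ c ∈ S, (ed c).ncard ≤ r * d := by
    intro c hcS
    obtain ⟨hinj, hadj⟩ := hSP.1 c hcS
    have hsub : ed c ⊆ ⋃ a : Fin (H c.1).n,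
        (fun w => s(c.2 a, w)) '' G.neighborSet (c.2 a) := by
      rintro e ⟨e0, he0, rfl⟩
      induction e0 with
      | _ a b =>
        exact Set.mem_iUnion.mpr ⟨a, c.2 b, hadj a b he0, rfl⟩
    calc (ed c).ncard ≤ (⋃ a : Fin (H c.1).n,
          (fun w => s(c.2 a, w)) '' G.neighborSet (c.2 a)).ncard :=
        Set.ncard_le_ncard hsub (Set.toFinite _)
      _ ≤ ∑ a : Fin (H c.1).n, ((fun w => s(c.2 a, w)) '' G.neighborSet (c.2 a)).ncard := by
        rw [Set.ncard_eq_toFinset_card']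
        have h1 : (⋃ a : Fin (H c.1).n,
            (fun w => s(c.2 a, w)) '' G.neighborSet (c.2 a)).toFinset ⊆
            Finset.univ.biUnion (fun a : Fin (H c.1).n =>
              ((fun w => s(c.2 a, w)) '' G.neighborSet (c.2 a)).toFinset) := by
          intro e he
          simp only [Set.mem_toFinset, Set.mem_iUnion] at he
          obtain ⟨a, ha⟩ := he
          exact Finset.mem_biUnion.mpr ⟨a, Finset.mem_univ a, Set.mem_toFinset.mpr ha⟩
        refine le_trans (Finset.card_le_card h1) (le_trans Finset.card_biUnion_le
          (le_of_eq (Finset.sum_congr rfl fun a _ => ?_)))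
        rw [← Set.ncard_eq_toFinset_card']
      _ ≤ ∑ a : Fin (H c.1).n, d := by
        refine Finset.sum_le_sum fun a _ => le_trans (Set.ncard_image_le (Set.toFinite _)) (hdeg _)
      _ = (H c.1).n * d := by simp [Finset.sum_const, mul_comm]
      _ ≤ r * d := Nat.mul_le_mul_right d (hsize c.1)
  -- distance bound
  have hDcard : D.ncard ≤ S.card * (r * d) := by
    have : D.ncard ≤ ∑ c ∈ S, (ed c).ncard := by
      rw [Set.ncard_eq_toFinset_card']
      have hDt : D.toFinset ⊆ S.biUnion fun c => (ed c).toFinset := by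
        intro e he
        simp only [Set.mem_toFinset, hD, Set.mem_iUnion] at he
        obtain ⟨c, hc, hce⟩ := he
        exact Finset.mem_biUnion.mpr ⟨c, hc, Set.mem_toFinset.mpr hce⟩
      refine le_trans (Finset.card_le_card hDt) (le_trans Finset.card_biUnion_le
        (le_of_eq (Finset.sum_congr rfl fun c _ => ?_)))
      rw [← Set.ncard_eq_toFinset_card']
    refine le_trans this (le_trans (Finset.sum_le_sum hkey) ?_)
    simp [Finset.sum_const, mul_comm]
  have hdist : (symmDiff G.edgeSet G'.edgeSet).ncard ≤ S.card * (r * d) := by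
    refine le_trans (le_trans (Set.ncard_le_ncard ?_ (Set.toFinite _)) hDcard) le_rfl
    intro e he
    rw [Set.mem_symmDiff] at he
    rcases he with ⟨heG, heG'⟩ | ⟨heG', heG⟩
    · rw [hedgeset] at heG'
      by_contra hmem
      exact heG' ⟨heG, hmem⟩
    · rw [hedgeset] at heG'
      exact absurd heG'.1 heG
  have hmain := hfar G' hdeg' hfree
  have hlt : (ε * d * n : ℝ) < (S.card : ℝ) * (r * d) := by
    refine lt_of_lt_of_le hmain ?_
    calc ((symmDiff G.edgeSet G'.edgeSet).ncard : ℝ) ≤ ((S.card * (r * d) : ℕ) : ℝ) := by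
          exact_mod_cast hdist
      _ = (S.card : ℝ) * (r * d) := by push_cast; ring
  -- divide
  have hdpos : (0 : ℝ) < d := by exact_mod_cast hd
  have hrpos : (0 : ℝ) < r := by exact_mod_cast hr
  have hcount : (ε * n / r : ℝ) < (S.card : ℝ) := by
    rw [div_lt_iff₀ hrpos]
    have := (mul_lt_mul_iff_of_pos_right hdpos).mp (by linarith [hlt] : ε * n * d < (S.card : ℝ) * r * d)
    linarith
  refine ⟨S.card, hcount, ?_⟩
  let e := S.equivFin
  refine ⟨fun j => ((e.symm j : C)).1, fun j => ((e.symm j : C)).2, ?_, ?_⟩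
  · intro j
    exact hSP.1 _ (e.symm j).2
  · intro j j' hjj'
    have hne : ((e.symm j : C)) ≠ ((e.symm j' : C)) := by
      intro h
      exact hjj' (by
        have : e.symm j = e.symm j' := Subtype.ext h
        simpa using congrArg e this)
    exact hSP.2 (e.symm j).2 (e.symm j').2 hne
end

section
/- Let G be a simple graph on n vertices with maximum degree at most d (d ≥ 1), and let k ≥ 1 and m ≥ 1 be integers. Say a graph F contains a k-star pattern of size at most s if there is a vertex set S with F[S] connected, |S| ≤ s, and k distinct vertices outside S each adjacent in F to some vertex of S (this is equivalent to F containing the k-star K_{1,k} as a minor with the central branch set of size at most s). Suppose G contains no k-star pattern of size at most m. Then there exists a spanning subgraph G' of G with |E(G) \ E(G')| ≤ n·k·d/m such that every connected component of G' has at most m vertices; consequently G' contains no vertex set S' with G'[S'] connected together with k distinct vertices outside S' each adjacent in G' to some vertex of S'. -/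
/-- `F` contains a `k`-star pattern of size at most `s`: a vertex set `S` with `F[S]`
connected and `|S| ≤ s`, together with `k` distinct vertices outside `S` each adjacent
in `F` to some vertex of `S`. -/
def StarPattern {V : Type*} [DecidableEq V] (F : SimpleGraph V) (k s : ℕ) : Prop :=
  ∃ S T : Finset V, (F.induce (S : Set V)).Connected ∧ S.card ≤ s ∧ T.card = k ∧
    (∀ v ∈ T, v ∉ S) ∧ (∀ v ∈ T, ∃ u ∈ S, F.Adj v u)

section Aux

variable {n : ℕ}

lemma aux_singleton_connected (G : SimpleGraph (Fin n)) (v : Fin n) :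
    (G.induce ({v} : Set (Fin n))).Connected := by
  have h := (SimpleGraph.Subgraph.singletonSubgraph_connected (G := G) (v := v)).induce_verts
  simpa using h

/-- Grow a connected set inside `R` until it has size `m` or is closed in `R`. -/
lemma aux_grow (G : SimpleGraph (Fin n)) (m : ℕ) (hm : 1 ≤ m)
    (R : Finset (Fin n)) (hR : R.Nonempty) :
    ∃ S : Finset (Fin n), S ⊆ R ∧ S.Nonempty ∧ (G.induce (S : Set (Fin n))).Connected ∧
      S.card ≤ m ∧ (S.card = m ∨ ∀ v ∈ R, v ∉ S → ∀ u ∈ S, ¬ G.Adj v u) := by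
  classical
  set C := R.powerset.filter
    (fun (S : Finset (Fin n)) => S.Nonempty ∧ (G.induce (S : Set (Fin n))).Connected ∧ S.card ≤ m) with hC
  have hCne : C.Nonempty := by
    obtain ⟨v, hv⟩ := hR
    refine ⟨{v}, ?_⟩
    simp only [hC, Finset.mem_filter, Finset.mem_powerset, Finset.singleton_subset_iff]
    refine ⟨hv, Finset.singleton_nonempty v, ?_, ?_⟩
    · rw [Finset.coe_singleton]; exact aux_singleton_connected G v
    · rw [Finset.card_singleton]; exact hm
  obtain ⟨S, hSC, hmax⟩ := C.exists_max_image (fun S => S.card) hCne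
  simp only [hC, Finset.mem_filter, Finset.mem_powerset] at hSC
  obtain ⟨hSR, hSne, hScon, hScard⟩ := hSC
  refine ⟨S, hSR, hSne, hScon, hScard, ?_⟩
  by_cases hcard : S.card = m
  · exact Or.inl hcard
  refine Or.inr fun v hvR hvS u huS hadj => ?_
  have hcon' : (G.induce ((insert v S : Finset (Fin n)) : Set (Fin n))).Connected := by
    rw [Finset.coe_insert, Set.insert_eq]
    have h1 := SimpleGraph.induce_union_connected (G := G) (s := {v, u}) (t := (S : Set (Fin n)))
      (SimpleGraph.induce_pair_connected_of_adj hadj).preconnected hScon.preconnected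
      ⟨u, by simp, huS⟩
    have heq : ({v} ∪ (S : Set (Fin n))) = {v, u} ∪ ↑S := by
      ext x; by_cases hx : x = u <;> simp [hx, huS]
    rw [heq]; exact h1
  have hmem : insert v S ∈ C := by
    simp only [hC, Finset.mem_filter, Finset.mem_powerset]
    refine ⟨Finset.insert_subset hvR hSR, Finset.insert_nonempty _ _, hcon', ?_⟩
    rw [Finset.card_insert_of_notMem hvS]; omega
  have := hmax _ hmem
  rw [Finset.card_insert_of_notMem hvS] at this
  omega

open scoped Classical in
/-- ordered pairs of adjacent vertices of `R` not lying in a common block of `P`. -/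
noncomputable def cutPairs (G : SimpleGraph (Fin n)) (R : Finset (Fin n))
    (P : Finset (Finset (Fin n))) : Finset (Fin n × Fin n) :=
  Finset.univ.filter
    (fun p => G.Adj p.1 p.2 ∧ p.1 ∈ R ∧ p.2 ∈ R ∧ ¬ ∃ B ∈ P, p.1 ∈ B ∧ p.2 ∈ B)

lemma aux_partition (G : SimpleGraph (Fin n)) (d k m : ℕ) (hm : 1 ≤ m)
    (hdeg : ∀ v, (G.neighborSet v).ncard ≤ d) (hno : ¬ StarPattern G k m) :
    ∀ N : ℕ, ∀ R : Finset (Fin n), R.card ≤ N →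
    ∃ P : Finset (Finset (Fin n)),
      (∀ B ∈ P, B.Nonempty ∧ B ⊆ R ∧ B.card ≤ m) ∧
      (∀ v ∈ R, ∃ B ∈ P, v ∈ B) ∧
      (∀ B ∈ P, ∀ B' ∈ P, B ≠ B' → Disjoint B B') ∧
      m * (cutPairs G R P).card ≤ R.card * (2 * (k - 1) * d) := by
  classical
  intro N
  induction N with
  | zero =>
    intro R hRcard
    have hR : R = ∅ := Finset.card_eq_zero.mp (Nat.le_zero.mp hRcard)
    subst hR
    refine ⟨∅, by simp, by simp, by simp, ?_⟩
    have : cutPairs G ∅ ∅ = ∅ := by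
      ext p; simp [cutPairs]
    simp [this]
  | succ N ih =>
    intro R hRcard
    rcases Finset.eq_empty_or_nonempty R with hR | hR
    · subst hR
      exact ih ∅ (by simp)
    obtain ⟨S, hSR, hSne, hScon, hScard, halt⟩ := aux_grow G m hm R hR
    have hScardpos : 1 ≤ S.card := Finset.card_pos.mpr hSne
    have hsd : (R \ S).card ≤ N := by
      have h1 : (R \ S).card = R.card - S.card := Finset.card_sdiff_of_subset hSR
      omega
    obtain ⟨P', hP'blocks, hP'cover, hP'disj, hP'count⟩ := ih (R \ S) hsd
    have hSnot : S ∉ P' := by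
      intro hmem
      obtain ⟨v, hv⟩ := hSne
      have := (hP'blocks S hmem).2.1 hv
      simp [Finset.mem_sdiff, hv] at this
    refine ⟨insert S P', ?_, ?_, ?_, ?_⟩
    · intro B hB
      rcases Finset.mem_insert.mp hB with hB | hB
      · subst hB; exact ⟨hSne, hSR, hScard⟩
      · obtain ⟨h1, h2, h3⟩ := hP'blocks B hB
        exact ⟨h1, h2.trans (Finset.sdiff_subset), h3⟩
    · intro v hv
      by_cases hvS : v ∈ S
      · exact ⟨S, Finset.mem_insert_self _ _, hvS⟩
      · obtain ⟨B, hB, hvB⟩ := hP'cover v (Finset.mem_sdiff.mpr ⟨hv, hvS⟩)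
        exact ⟨B, Finset.mem_insert_of_mem hB, hvB⟩
    · intro B hB B' hB' hne
      rcases Finset.mem_insert.mp hB with hB | hB <;>
        rcases Finset.mem_insert.mp hB' with hB' | hB'
      · exact absurd (hB.trans hB'.symm) hne
      · rw [hB]
        exact Finset.disjoint_left.mpr fun a ha ha' =>
          by simpa [Finset.mem_sdiff, ha] using (hP'blocks B' hB').2.1 ha'
      · rw [hB']
        exact (Finset.disjoint_left.mpr fun a ha ha' =>
          by simpa [Finset.mem_sdiff, ha] using (hP'blocks B hB).2.1 ha').symm
      · exact hP'disj B hB B' hB' hne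
    · -- the counting
      rcases halt with hcard | hclosed
      · -- S has exactly m vertices; at most k-1 outside neighbours
        set T : Finset (Fin n) := (R \ S).filter (fun v => ∃ u ∈ S, G.Adj v u) with hT
        have hTcard : T.card ≤ k - 1 := by
          by_contra hlt
          push_neg at hlt
          have hk1 : k ≤ T.card := by omega
          obtain ⟨T', hT'sub, hT'card⟩ := Finset.exists_subset_card_eq hk1
          apply hno
          refine ⟨S, T', hScon, le_of_eq hcard, hT'card, ?_, ?_⟩
          · intro v hv
            have := hT'sub hv
            rw [hT, Finset.mem_filter, Finset.mem_sdiff] at this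
            exact this.1.2
          · intro v hv
            have := hT'sub hv
            rw [hT, Finset.mem_filter] at this
            exact this.2
        set E₁ : Finset (Fin n × Fin n) :=
          T.biUnion (fun v => ((G.neighborSet v).toFinset.image (fun u => (u, v)))) with hE₁
        set E₂ : Finset (Fin n × Fin n) :=
          T.biUnion (fun v => ((G.neighborSet v).toFinset.image (fun u => (v, u)))) with hE₂
        have hEcard : ∀ (f : Fin n → Fin n → Fin n × Fin n),
            (T.biUnion (fun v => ((G.neighborSet v).toFinset.image (f v)))).card
              ≤ (k - 1) * d := by
          intro f
          calc (T.biUnion (fun v => ((G.neighborSet v).toFinset.image (f v)))).card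
              ≤ ∑ v ∈ T, ((G.neighborSet v).toFinset.image (f v)).card :=
                Finset.card_biUnion_le
            _ ≤ ∑ v ∈ T, d := by
                refine Finset.sum_le_sum fun v _ => ?_
                refine le_trans Finset.card_image_le ?_
                rw [← Set.ncard_eq_toFinset_card']
                exact hdeg v
            _ = T.card * d := by rw [Finset.sum_const, smul_eq_mul]
            _ ≤ (k - 1) * d := Nat.mul_le_mul_right d hTcard
        have hsub : cutPairs G R (insert S P') ⊆ cutPairs G (R \ S) P' ∪ E₁ ∪ E₂ := by
          intro p hp
          simp only [cutPairs, Finset.mem_filter, Finset.mem_univ, true_and] at hp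
          obtain ⟨hadj, h1R, h2R, hnB⟩ := hp
          by_cases h1S : p.1 ∈ S <;> by_cases h2S : p.2 ∈ S
          · exact absurd ⟨S, Finset.mem_insert_self _ _, h1S, h2S⟩ hnB
          · -- p.1 ∈ S, p.2 ∉ S : p ∈ E₁
            have h2T : p.2 ∈ T := by
              rw [hT, Finset.mem_filter, Finset.mem_sdiff]
              exact ⟨⟨h2R, h2S⟩, p.1, h1S, hadj.symm⟩
            refine Finset.mem_union_left _ (Finset.mem_union_right _ ?_)
            rw [hE₁, Finset.mem_biUnion]
            exact ⟨p.2, h2T, Finset.mem_image.mpr ⟨p.1, by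
              simp [SimpleGraph.mem_neighborSet, hadj.symm]⟩⟩
          · have h1T : p.1 ∈ T := by
              rw [hT, Finset.mem_filter, Finset.mem_sdiff]
              exact ⟨⟨h1R, h1S⟩, p.2, h2S, hadj⟩
            refine Finset.mem_union_right _ ?_
            rw [hE₂, Finset.mem_biUnion]
            exact ⟨p.1, h1T, Finset.mem_image.mpr ⟨p.2, by
              simp [SimpleGraph.mem_neighborSet, hadj]⟩⟩
          · refine Finset.mem_union_left _ (Finset.mem_union_left _ ?_)
            simp only [cutPairs, Finset.mem_filter, Finset.mem_univ, true_and,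
              Finset.mem_sdiff]
            refine ⟨hadj, ⟨h1R, h1S⟩, ⟨h2R, h2S⟩, ?_⟩
            rintro ⟨B, hB, hmem⟩
            exact hnB ⟨B, Finset.mem_insert_of_mem hB, hmem⟩
        have hcut : (cutPairs G R (insert S P')).card
            ≤ (cutPairs G (R \ S) P').card + ((k - 1) * d + (k - 1) * d) := by
          calc (cutPairs G R (insert S P')).card
              ≤ (cutPairs G (R \ S) P' ∪ E₁ ∪ E₂).card := Finset.card_le_card hsub
            _ ≤ (cutPairs G (R \ S) P' ∪ E₁).card + E₂.card := Finset.card_union_le _ _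
            _ ≤ (cutPairs G (R \ S) P').card + E₁.card + E₂.card := by
                have := Finset.card_union_le (cutPairs G (R \ S) P') E₁
                omega
            _ ≤ _ := by
                have h1 := hEcard (fun v u => (u, v))
                have h2 := hEcard (fun v u => (v, u))
                rw [hE₁, hE₂]
                omega
        have hmR : m ≤ R.card := hcard ▸ Finset.card_le_card hSR
        have hRS : (R \ S).card = R.card - m := by
          rw [Finset.card_sdiff_of_subset hSR, hcard]
        calc m * (cutPairs G R (insert S P')).card
            ≤ m * ((cutPairs G (R \ S) P').card + ((k - 1) * d + (k - 1) * d)) :=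
              Nat.mul_le_mul_left m hcut
          _ = m * (cutPairs G (R \ S) P').card + m * (2 * (k - 1) * d) := by ring
          _ ≤ (R.card - m) * (2 * (k - 1) * d) + m * (2 * (k - 1) * d) := by
              rw [← hRS]; omega
          _ = R.card * (2 * (k - 1) * d) := by
              rw [← Nat.add_mul, Nat.sub_add_cancel hmR]
      · -- S is closed in R: no new cut pairs
        have hsub : cutPairs G R (insert S P') ⊆ cutPairs G (R \ S) P' := by
          intro p hp
          simp only [cutPairs, Finset.mem_filter, Finset.mem_univ, true_and] at hp ⊢
          obtain ⟨hadj, h1R, h2R, hnB⟩ := hp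
          by_cases h1S : p.1 ∈ S <;> by_cases h2S : p.2 ∈ S
          · exact absurd ⟨S, Finset.mem_insert_self _ _, h1S, h2S⟩ hnB
          · exact absurd hadj.symm (hclosed p.2 h2R h2S p.1 h1S)
          · exact absurd hadj (hclosed p.1 h1R h1S p.2 h2S)
          · refine ⟨hadj, Finset.mem_sdiff.mpr ⟨h1R, h1S⟩, Finset.mem_sdiff.mpr ⟨h2R, h2S⟩, ?_⟩
            rintro ⟨B, hB, hmem⟩
            exact hnB ⟨B, Finset.mem_insert_of_mem hB, hmem⟩
        calc m * (cutPairs G R (insert S P')).card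
            ≤ m * (cutPairs G (R \ S) P').card :=
              Nat.mul_le_mul_left m (Finset.card_le_card hsub)
          _ ≤ (R \ S).card * (2 * (k - 1) * d) := hP'count
          _ ≤ R.card * (2 * (k - 1) * d) :=
              Nat.mul_le_mul_right _ (Finset.card_le_card Finset.sdiff_subset)

end Aux

/-- if a simple graph `G` on `n` vertices with maximum degree at most `d`
contains no `k`-star pattern of size at most `m`, then there is a spanning subgraph `G'`
of `G` obtained by deleting at most `n·k·d/m` edges, all of whose connected components
have at most `m` vertices; consequently `G'` contains no `k`-star pattern of any size. -/
theorem star_minor_free_decomposition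
    (n d k m : ℕ) (hd : 1 ≤ d) (hk : 1 ≤ k) (hm : 1 ≤ m)
    (G : SimpleGraph (Fin n)) (hdeg : ∀ v, (G.neighborSet v).ncard ≤ d)
    (hno : ¬ StarPattern G k m) :
    ∃ G' : SimpleGraph (Fin n), G' ≤ G ∧
      ((G.edgeSet \ G'.edgeSet).ncard : ℝ) ≤ (n : ℝ) * k * d / m ∧
      (∀ v : Fin n, ({u : Fin n | G'.Reachable v u}).ncard ≤ m) ∧
      (∀ s : ℕ, ¬ StarPattern G' k s) := by
  classical
  have huniv : (Finset.univ : Finset (Fin n)).card = n := by simp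
  obtain ⟨P, hblocks, hcover, hdisj, hcount⟩ :=
    aux_partition G d k m hm hdeg hno n Finset.univ (le_of_eq huniv)
  set G' : SimpleGraph (Fin n) :=
    { Adj := fun u v => G.Adj u v ∧ ∃ B ∈ P, u ∈ B ∧ v ∈ B,
      symm := ⟨fun u v ⟨h, B, hB, h1, h2⟩ => ⟨h.symm, B, hB, h2, h1⟩⟩,
      loopless := ⟨fun v h => G.loopless.irrefl v h.1⟩ } with hG'
  have hle : G' ≤ G := fun u v h => h.1
  have hadj' : ∀ u v, G'.Adj u v ↔ G.Adj u v ∧ ∃ B ∈ P, u ∈ B ∧ v ∈ B := fun _ _ => Iff.rfl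
  -- reachability stays within a block
  have hblockW : ∀ (a b : Fin n) (w : G'.Walk a b), ∀ B ∈ P, a ∈ B → b ∈ B := by
    intro a b w
    induction w with
    | nil => exact fun B _ ha => ha
    | cons h p ih =>
      intro B hB ha
      obtain ⟨_, B', hB', h1, h2⟩ := h
      have hBB' : B = B' := by
        by_contra hne
        exact (Finset.disjoint_left.mp (hdisj B hB B' hB' hne) ha) h1
      exact ih B hB (hBB' ▸ h2)
  have hblock : ∀ a b : Fin n, G'.Reachable a b → ∀ B ∈ P, a ∈ B → b ∈ B :=
    fun a b hab => hab.elim fun w => hblockW a b w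
  refine ⟨G', hle, ?_, ?_, ?_⟩
  · -- edge count
    set H : SimpleGraph (Fin n) := G \ G' with hH
    have hHadj : ∀ u v, H.Adj u v ↔ G.Adj u v ∧ ¬ G'.Adj u v := fun _ _ => SimpleGraph.sdiff_adj ..
    have hdart := SimpleGraph.dart_card_eq_twice_card_edges H
    simp only [← Set.ncard_coe_finset, SimpleGraph.coe_edgeFinset] at hdart
    have hinj : (Finset.univ : Finset H.Dart).card ≤ (cutPairs G Finset.univ P).card := by
      refine Finset.card_le_card_of_injOn (fun d => d.toProd) ?_ ?_
      · intro dd _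
        have hd := dd.adj
        rw [hHadj] at hd
        simp only [Finset.mem_coe, cutPairs, Finset.mem_filter, Finset.mem_univ, true_and]
        refine ⟨hd.1, ?_⟩
        rintro ⟨B, hB, h1, h2⟩
        exact hd.2 ⟨hd.1, B, hB, h1, h2⟩
      · exact fun a _ b _ hab => SimpleGraph.Dart.toProd_injective hab
    have hEcut : 2 * H.edgeSet.ncard ≤ (cutPairs G Finset.univ P).card := by
      rw [← hdart]
      simpa using hinj
    have hkey : m * H.edgeSet.ncard ≤ n * k * d := by
      have h1 : m * (2 * H.edgeSet.ncard) ≤ n * (2 * (k - 1) * d) := by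
        calc m * (2 * H.edgeSet.ncard) ≤ m * (cutPairs G Finset.univ P).card :=
              Nat.mul_le_mul_left m hEcut
          _ ≤ (Finset.univ : Finset (Fin n)).card * (2 * (k - 1) * d) := hcount
          _ = n * (2 * (k - 1) * d) := by rw [huniv]
      have h2 : 2 * (m * H.edgeSet.ncard) ≤ 2 * (n * ((k - 1) * d)) := by
        calc 2 * (m * H.edgeSet.ncard) = m * (2 * H.edgeSet.ncard) := by ring
          _ ≤ n * (2 * (k - 1) * d) := h1
          _ = 2 * (n * ((k - 1) * d)) := by ring
      have h3 : m * H.edgeSet.ncard ≤ n * ((k - 1) * d) :=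
        Nat.le_of_mul_le_mul_left h2 (by norm_num)
      calc m * H.edgeSet.ncard ≤ n * ((k - 1) * d) := h3
        _ ≤ n * (k * d) := Nat.mul_le_mul_left n (Nat.mul_le_mul_right d (Nat.sub_le k 1))
        _ = n * k * d := by ring
    have hncard : (G.edgeSet \ G'.edgeSet).ncard = H.edgeSet.ncard := by
      rw [← SimpleGraph.edgeSet_sdiff, ← hH]
    rw [hncard]
    rw [le_div_iff₀ (by exact_mod_cast hm : (0:ℝ) < m)]
    calc (H.edgeSet.ncard : ℝ) * m = ((H.edgeSet.ncard * m : ℕ) : ℝ) := by push_cast; ring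
      _ ≤ ((n * k * d : ℕ) : ℝ) := by
          exact_mod_cast (by rw [Nat.mul_comm]; exact hkey : H.edgeSet.ncard * m ≤ n * k * d)
      _ = (n : ℝ) * k * d := by push_cast; ring
  · -- components have at most m vertices
    intro v
    obtain ⟨B, hB, hvB⟩ := hcover v (Finset.mem_univ v)
    have hsub : {u : Fin n | G'.Reachable v u} ⊆ (B : Set (Fin n)) :=
      fun u hu => hblock v u hu B hB hvB
    calc ({u : Fin n | G'.Reachable v u}).ncard
        ≤ (B : Set (Fin n)).ncard := Set.ncard_le_ncard hsub (Set.Finite.subset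
          (Set.finite_univ) (Set.subset_univ _))
      _ = B.card := Set.ncard_coe_finset B
      _ ≤ m := (hblocks B hB).2.2
  · -- no star pattern in G'
    rintro s ⟨S, T, hcon, _, hTcard, hTS, hTadj⟩
    apply hno
    have hSconG : (G.induce (S : Set (Fin n))).Connected := by
      refine hcon.mono ?_
      intro a b hab
      exact hle hab
    -- S is contained in a block, so |S| ≤ m
    have hSne : S.Nonempty := by
      obtain ⟨⟨v, hv⟩⟩ := hcon.nonempty
      exact ⟨v, hv⟩
    obtain ⟨v, hvS⟩ := hSne
    obtain ⟨B, hB, hvB⟩ := hcover v (Finset.mem_univ v)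
    have hSB : S ⊆ B := by
      intro u huS
      have hreach : G'.Reachable v u := by
        have h := hcon.preconnected ⟨v, hvS⟩ ⟨u, huS⟩
        exact h.map (SimpleGraph.Embedding.induce (S : Set (Fin n))).toHom
      exact hblock v u hreach B hB hvB
    have hScard : S.card ≤ m := le_trans (Finset.card_le_card hSB) (hblocks B hB).2.2
    refine ⟨S, T, hSconG, hScard, hTcard, hTS, ?_⟩
    intro w hw
    obtain ⟨u, hu, hadj⟩ := hTadj w hw
    exact ⟨u, hu, hle hadj⟩
end

section
/- Let ε > 0 and let G be a digraph on n vertices in which every vertex has out-degree at most 1. Suppose that for every set E' ⊆ E(G) with |E'| ≤ ε·n, the digraph obtained from G by deleting the edges in E' still contains a directed cycle. Then G contains more than ε·n pairwise vertex-disjoint directed cycles, and more than ε·n/2 of these cycles each have length at most 2/ε. -/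
/-- `v : Fin ℓ → Fin n` is a directed cycle of length `ℓ ≥ 1` in the digraph with edge
set `E`: the vertices are distinct and consecutive vertices (cyclically) are joined by
edges. -/
def IsCycleOn {n : ℕ} (E : Finset (Fin n × Fin n)) (ℓ : ℕ) (v : Fin ℓ → Fin n) : Prop :=
  0 < ℓ ∧ Function.Injective v ∧
    ∀ i : Fin ℓ, (v i, v ⟨(i.1 + 1) % ℓ, Nat.mod_lt _ i.pos⟩) ∈ E

lemma uniq_out {n : ℕ} {E : Finset (Fin n × Fin n)} (hdeg : ∀ v, outdeg E v ≤ 1)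
    {a b c : Fin n} (h1 : (a, b) ∈ E) (h2 : (a, c) ∈ E) : b = c := by
  by_contra hbc
  have h1' : (a, b) ∈ E.filter (fun e => e.1 = a) := by simp [h1]
  have h2' : (a, c) ∈ E.filter (fun e => e.1 = a) := by simp [h2]
  have hlt : 1 < (E.filter (fun e => e.1 = a)).card :=
    Finset.one_lt_card.mpr ⟨_, h1', _, h2', by simp [hbc]⟩
  have := hdeg a
  unfold outdeg at this
  omega

lemma cycle_mem_of_shared {n : ℕ} {E F : Finset (Fin n × Fin n)} (hF : F ⊆ E)
    (hdeg : ∀ v, outdeg E v ≤ 1)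
    {ℓ ℓ' : ℕ} {v : Fin ℓ → Fin n} {w : Fin ℓ' → Fin n}
    (hv : IsCycleOn E ℓ v) (hw : IsCycleOn F ℓ' w)
    {i : Fin ℓ} {t0 : Fin ℓ'} (hshare : v i = w t0) :
    (v ⟨0, hv.1⟩, v ⟨1 % ℓ, Nat.mod_lt _ hv.1⟩) ∈ F := by
  obtain ⟨hℓ, hinj, hedge⟩ := hv
  obtain ⟨hℓ', hinj', hedge'⟩ := hw
  have main : ∀ k : ℕ, ∃ t : Fin ℓ', v ⟨(i.1 + k) % ℓ, Nat.mod_lt _ hℓ⟩ = w t := by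
    intro k
    induction k with
    | zero =>
        refine ⟨t0, ?_⟩
        have hidx : (⟨(i.1 + 0) % ℓ, Nat.mod_lt _ hℓ⟩ : Fin ℓ) = i := by
          ext; simp [Nat.mod_eq_of_lt i.isLt]
        rw [hidx]; exact hshare
    | succ k ih =>
        obtain ⟨t, ht⟩ := ih
        have h1 := hedge ⟨(i.1 + k) % ℓ, Nat.mod_lt _ hℓ⟩
        have h2 := hedge' t
        rw [ht] at h1
        have heq := uniq_out hdeg h1 (hF h2)
        refine ⟨⟨(t.1 + 1) % ℓ', Nat.mod_lt _ hℓ'⟩, ?_⟩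
        have hidx : (⟨(i.1 + (k + 1)) % ℓ, Nat.mod_lt _ hℓ⟩ : Fin ℓ) =
            (⟨((i.1 + k) % ℓ + 1) % ℓ, Nat.mod_lt _ hℓ⟩ : Fin ℓ) := by
          ext; simp [Nat.mod_add_mod, Nat.add_assoc]
        rw [hidx]; exact heq
  obtain ⟨t, ht⟩ := main (ℓ - i.1)
  have hidx : (⟨(i.1 + (ℓ - i.1)) % ℓ, Nat.mod_lt _ hℓ⟩ : Fin ℓ) = ⟨0, hℓ⟩ := by
    ext; simp [Nat.add_sub_cancel' (le_of_lt i.isLt)]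
  rw [hidx] at ht
  have h1 := hedge ⟨0, hℓ⟩
  have h2 := hedge' t
  rw [ht] at h1
  have heq := uniq_out hdeg h1 (hF h2)
  have heq' : v ⟨1 % ℓ, Nat.mod_lt _ hℓ⟩ = w ⟨(t.1 + 1) % ℓ', Nat.mod_lt _ hℓ'⟩ := heq
  rw [ht, heq']
  exact h2

lemma extract {n : ℕ} (ε : ℝ) (hε : 0 < ε) (E : Finset (Fin n × Fin n))
    (hdeg : ∀ v, outdeg E v ≤ 1)
    (hfar : ∀ E' : Finset (Fin n × Fin n), E' ⊆ E → ((E'.card : ℝ) ≤ ε * n) →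
      ∃ (ℓ : ℕ) (v : Fin ℓ → Fin n), IsCycleOn (E \ E') ℓ v) :
    ∀ k : ℕ, (k : ℝ) ≤ ε * n + 1 →
      ∃ c : Fin k → Σ ℓ : ℕ, (Fin ℓ → Fin n),
        (∀ j, IsCycleOn E (c j).1 (c j).2) ∧
        (∀ j j', j ≠ j' → ∀ a b, (c j).2 a ≠ (c j').2 b) := by
  intro k
  induction k with
  | zero => exact fun _ => ⟨fun j => j.elim0, fun j => j.elim0, fun j => j.elim0⟩
  | succ k ih =>
    intro hk
    have hk' : (k : ℝ) ≤ ε * n := by push_cast at hk; linarith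
    obtain ⟨c, hc, hdisj⟩ := ih (by linarith)
    classical
    set ed : Fin k → Fin n × Fin n := fun j =>
      ((c j).2 ⟨0, (hc j).1⟩, (c j).2 ⟨1 % (c j).1, Nat.mod_lt _ (hc j).1⟩) with hed
    have hedmem : ∀ j, ed j ∈ E := by
      intro j
      have h := (hc j).2.2 ⟨0, (hc j).1⟩
      have hidx : (⟨(0 + 1) % (c j).1, Nat.mod_lt _ (hc j).1⟩ : Fin (c j).1) =
          ⟨1 % (c j).1, Nat.mod_lt _ (hc j).1⟩ := by ext; simp
      rw [hidx] at h
      exact h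
    set E' : Finset (Fin n × Fin n) := Finset.univ.image ed with hE'
    have hsub : E' ⊆ E := by
      intro e he
      obtain ⟨j, _, rfl⟩ := Finset.mem_image.mp he
      exact hedmem j
    have hcard : (E'.card : ℝ) ≤ ε * n := by
      refine le_trans ?_ hk'
      have : E'.card ≤ k := le_trans Finset.card_image_le (by simp)
      exact_mod_cast this
    obtain ⟨ℓ, w, hw⟩ := hfar E' hsub hcard
    have hwE : IsCycleOn E ℓ w :=
      ⟨hw.1, hw.2.1, fun i => (Finset.mem_sdiff.mp (hw.2.2 i)).1⟩
    have hnew : ∀ j a b, w a ≠ (c j).2 b := by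
      intro j a b hab
      have hm := cycle_mem_of_shared (Finset.sdiff_subset) hdeg (hc j) hw hab.symm
      have : ed j ∈ E \ E' := hm
      have hin : ed j ∈ E' := Finset.mem_image.mpr ⟨j, Finset.mem_univ j, rfl⟩
      exact (Finset.mem_sdiff.mp this).2 hin
    refine ⟨Fin.cons ⟨ℓ, w⟩ c, ?_, ?_⟩
    · intro j
      refine Fin.cases ?_ ?_ j
      · exact hwE
      · intro i; exact hc i
    · intro j j'
      induction j using Fin.cases with
      | zero =>
        induction j' using Fin.cases with
        | zero => intro h; exact absurd rfl h
        | succ i' => intro _ a b; exact hnew i' a b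
      | succ i =>
        induction j' using Fin.cases with
        | zero => intro _ a b h; exact hnew i b a h.symm
        | succ i' =>
          intro hne a b h
          exact hdisj i i' (fun he => hne (by rw [he])) a b h

/-- if every vertex of `G` has out-degree at most 1 and deleting any
`ε·n` edges leaves a directed cycle, then `G` has more than `ε·n` pairwise
vertex-disjoint directed cycles, more than `ε·n/2` of which have length at most `2/ε`. -/
theorem many_disjoint_short_cycles_of_far_from_acyclic
    (ε : ℝ) (hε : 0 < ε) (n : ℕ)
    (E : Finset (Fin n × Fin n)) (hirr : ∀ e ∈ E, e.1 ≠ e.2)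
    (hdeg : ∀ v, outdeg E v ≤ 1)
    (hfar : ∀ E' : Finset (Fin n × Fin n), E' ⊆ E → ((E'.card : ℝ) ≤ ε * n) →
      ∃ (ℓ : ℕ) (v : Fin ℓ → Fin n), IsCycleOn (E \ E') ℓ v) :
    ∃ (m : ℕ) (len : Fin m → ℕ) (v : ∀ j : Fin m, Fin (len j) → Fin n),
      (ε * n : ℝ) < (m : ℝ) ∧
      (∀ j, IsCycleOn E (len j) (v j)) ∧
      (∀ j j', j ≠ j' → ∀ a b, v j a ≠ v j' b) ∧
      (ε * n / 2 : ℝ) < (({j : Fin m | (len j : ℝ) ≤ 2 / ε}).ncard : ℝ) := by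
  classical
  have h0 : (0 : ℝ) ≤ ε * n := by positivity
  set m := Nat.floor (ε * n) + 1 with hm
  have hm1 : (m : ℝ) ≤ ε * n + 1 := by
    have := Nat.floor_le h0
    push_cast [hm]
    linarith
  have hm2 : ε * n < (m : ℝ) := by
    have := Nat.lt_floor_add_one (ε * n)
    push_cast [hm]
    linarith
  obtain ⟨c, hc, hdisj⟩ := extract ε hε E hdeg hfar m hm1
  set len : Fin m → ℕ := fun j => (c j).1 with hlen
  refine ⟨m, len, fun j => (c j).2, hm2, hc, hdisj, ?_⟩
  -- total length bound
  have hsum : ∑ j, len j ≤ n := by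
    have hinj : Function.Injective (fun p : Σ j : Fin m, Fin (len j) => (c p.1).2 p.2) := by
      rintro ⟨p1, p2⟩ ⟨q1, q2⟩ hpq
      by_cases h : p1 = q1
      · subst h
        have h2 : p2 = q2 := (hc p1).2.1 hpq
        simp [h2]
      · exact absurd hpq (hdisj p1 q1 h p2 q2)
    have := Fintype.card_le_of_injective _ hinj
    simpa using this
  set S := Finset.univ.filter (fun j : Fin m => ((len j : ℝ) ≤ 2 / ε)) with hS
  set Sc := Finset.univ.filter (fun j : Fin m => ¬((len j : ℝ) ≤ 2 / ε)) with hSc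
  have hsplit : S.card + Sc.card = m := by
    rw [hS, hSc, Finset.card_filter_add_card_filter_not]
    simp
  have hScb : (Sc.card : ℝ) * (2 / ε) ≤ n := by
    have h1 : (Sc.card : ℝ) • (2 / ε) ≤ ∑ j ∈ Sc, (len j : ℝ) := by
      have := Finset.card_nsmul_le_sum Sc (fun j => (len j : ℝ)) (2 / ε)
        (fun j hj => le_of_lt (lt_of_not_ge (Finset.mem_filter.mp hj).2))
      simpa using this
    have h2 : ∑ j ∈ Sc, (len j : ℝ) ≤ ∑ j, (len j : ℝ) :=
      Finset.sum_le_sum_of_subset_of_nonneg (Finset.subset_univ _)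
        (fun j _ _ => by positivity)
    have h3 : ∑ j, (len j : ℝ) ≤ n := by
      rw [← Nat.cast_sum]
      exact_mod_cast hsum
    simp only [smul_eq_mul] at h1
    linarith
  have hScb2 : (Sc.card : ℝ) ≤ ε * n / 2 := by
    have h4 := mul_le_mul_of_nonneg_right hScb hε.le
    have h5 : (Sc.card : ℝ) * (2 / ε) * ε = 2 * Sc.card := by
      field_simp
    rw [h5] at h4
    linarith
  have hncard : ({j : Fin m | (len j : ℝ) ≤ 2 / ε}).ncard = S.card := by
    rw [Set.ncard_eq_toFinset_card']
    congr 1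
    simp [hS, Set.toFinset_setOf]
  rw [hncard]
  have : (S.card : ℝ) + Sc.card = m := by exact_mod_cast hsplit
  linarith
end
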